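/- arXiv:1603.08596 — 4 statements merged into one kernel-verified Lean document; each statement's English description precedes it below -/
import Mathlib

section
/- For n ≥ 2, the number c_n of connected chord diagrams with n chords satisfies c_n = (n-1) · Σ_{k=1}^{n-1} c_k · c_{n-k}, with c_1 = 1. -/
open scoped Classical

namespace ChordStmt

/-- Chord `p` has an outgoing edge to chord `q` in the oriented intersection graph. -/
def crosses (p q : ℕ × ℕ) : Prop := p.1 < q.1 ∧ q.1 < p.2 ∧ p.2 < q.2

/-- A finite set of pairs `(a,b)` with `a < b` and all endpoints distinct. -/
def IsMatching (D : Finset (ℕ × ℕ)) : Prop :=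
  (∀ p ∈ D, p.1 < p.2) ∧
  ∀ p ∈ D, ∀ q ∈ D, p ≠ q → p.1 ≠ q.1 ∧ p.1 ≠ q.2 ∧ p.2 ≠ q.1 ∧ p.2 ≠ q.2

def points (D : Finset (ℕ × ℕ)) : Finset ℕ := D.biUnion fun p => {p.1, p.2}

/-- A chord diagram with `n` chords: a perfect matching of `{1, …, 2n}`. -/
def IsDiagramOn (n : ℕ) (D : Finset (ℕ × ℕ)) : Prop :=
  IsMatching D ∧ points D = Finset.Icc 1 (2 * n)

def Step (D : Finset (ℕ × ℕ)) (a b : ℕ × ℕ) : Prop :=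
  a ∈ D ∧ b ∈ D ∧ (crosses a b ∨ crosses b a)

def Reach (D : Finset (ℕ × ℕ)) (a b : ℕ × ℕ) : Prop :=
  Relation.ReflTransGen (Step D) a b

/-- The diagram is connected (its intersection graph is connected). -/
def ConnectedDiagram (D : Finset (ℕ × ℕ)) : Prop :=
  D.Nonempty ∧ ∀ p ∈ D, ∀ q ∈ D, Reach D p q

/-- A chord is terminal if it has no outgoing edge in the oriented intersection graph. -/
def IsTerminal (D : Finset (ℕ × ℕ)) (p : ℕ × ℕ) : Prop :=
  p ∈ D ∧ ∀ q ∈ D, ¬ crosses p q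

/-- The number of connected chord diagrams with `n` chords. -/
noncomputable def c (n : ℕ) : ℕ :=
  Set.ncard {D : Finset (ℕ × ℕ) | IsDiagramOn n D ∧ ConnectedDiagram D}

/-- The root chord: the chord with the smallest first endpoint. -/
noncomputable def rootChord (D : Finset (ℕ × ℕ)) : ℕ × ℕ :=
  if h : ∃ p ∈ D, ∀ q ∈ D, p.1 ≤ q.1 then h.choose else (0, 0)

lemma rootChord_mem {D : Finset (ℕ × ℕ)} (h : D.Nonempty) : rootChord D ∈ D := by
  have hex : ∃ p ∈ D, ∀ q ∈ D, p.1 ≤ q.1 := by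
    obtain ⟨p, hp, hmin⟩ := D.exists_min_image Prod.fst h
    exact ⟨p, hp, hmin⟩
  rw [rootChord, dif_pos hex]
  exact hex.choose_spec.1

/-- The connected component of the chord `p` in the diagram `D`. -/
noncomputable def componentOf (D : Finset (ℕ × ℕ)) (p : ℕ × ℕ) : Finset (ℕ × ℕ) :=
  D.filter fun q => Reach D p q

/-- The list of chords of `D` in intersection order: the root chord first, then
recursively the chords of the connected components of `D` minus the root chord,
components ordered by first vertex (equivalently: repeatedly split off the component
of the current root chord). -/
noncomputable def interOrder (D : Finset (ℕ × ℕ)) : List (ℕ × ℕ) :=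
  if h : D.Nonempty then
    if hK : componentOf D (rootChord D) = D then
      rootChord D :: interOrder (D.erase (rootChord D))
    else
      interOrder (componentOf D (rootChord D)) ++
        interOrder (D \ componentOf D (rootChord D))
  else []
termination_by D.card
decreasing_by
  · exact Finset.card_erase_lt_of_mem (rootChord_mem h)
  · exact Finset.card_lt_card
      (Finset.ssubset_iff_subset_ne.mpr ⟨Finset.filter_subset _ _, hK⟩)
  · exact Finset.card_lt_card
      (Finset.sdiff_ssubset (Finset.filter_subset _ _)
        ⟨rootChord D, Finset.mem_filter.mpr ⟨rootChord_mem h, Relation.ReflTransGen.refl⟩⟩)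

/-- `b(C)`: the (1-based) index of the first terminal chord in the intersection order. -/
noncomputable def bIndex (D : Finset (ℕ × ℕ)) : ℕ :=
  (interOrder D).findIdx (fun p => decide (IsTerminal D p)) + 1

/-- `b_{n,k}`: the number of connected chord diagrams `C` with `n` chords and `b(C) ≥ n - k`. -/
noncomputable def bCount (n k : ℕ) : ℕ :=
  Set.ncard {D : Finset (ℕ × ℕ) |
    IsDiagramOn n D ∧ ConnectedDiagram D ∧ n - k ≤ bIndex D}

/-- The terminal chords of `D` are exactly the last `k` chords in intersection order. -/
def TerminalExactlyLast (D : Finset (ℕ × ℕ)) (k : ℕ) : Prop :=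
  ∀ i : Fin (interOrder D).length,
    IsTerminal D ((interOrder D).get i) ↔ (interOrder D).length - k ≤ (i : ℕ)

/-- `o_{n,k}`: connected diagrams with `n` chords whose terminal chords are exactly
the last `k` chords in intersection order. -/
noncomputable def oCount (n k : ℕ) : ℕ :=
  Set.ncard {D : Finset (ℕ × ℕ) |
    IsDiagramOn n D ∧ ConnectedDiagram D ∧ TerminalExactlyLast D k}

end ChordStmt

/-!
In a connected diagram on `{1, …, 2n}` with `n ≥ 2` the chord `s` at the point `2` starts there.
Delete it: the component `E₁` of the chord at `1` and the remaining chords `E₂` (together with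
`s`) are connected diagrams, and no chord of `E₁` crosses one of `E₂` other than `s`. This
forces the points of `E₂` other than `2` to form an interval `[p + 2, p + 2m]` with `p ≥ 2`.
Conversely, connected diagrams on these two point sets glue to a connected diagram, because `E₁`
has points on both sides of `s`. After relabelling, the `2(n - m) - 1` choices of `p` give
`c n = ∑ₘ (2(n - m) - 1) c (n - m) c m`, and averaging this sum with its reflection `m ↦ n - m`
gives the recurrence.
-/

namespace ChordStmt

open Finset

section Reachability

variable {D E T : Finset (ℕ × ℕ)} {a b p : ℕ × ℕ}

theorem Step.symm (h : Step D a b) : Step D b a :=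
  ⟨h.2.1, h.1, h.2.2.symm⟩

theorem Reach.symm (h : Reach D a b) : Reach D b a := by
  induction h with
  | refl => exact .refl
  | tail _ hstep ih => exact .head hstep.symm ih

theorem Reach.mono (hDE : D ⊆ E) (h : Reach D a b) : Reach E a b :=
  Relation.ReflTransGen.mono (fun _ _ hs => ⟨hDE hs.1, hDE hs.2.1, hs.2.2⟩) _ _ h

theorem Reach.restrict (hT : ∀ x ∈ T, ∀ y, Step D x y → y ∈ T) (ha : a ∈ T)
    (h : Reach D a b) : Reach T a b ∧ b ∈ T := by
  induction h with
  | refl => exact ⟨.refl, ha⟩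
  | tail _ hstep ih =>
    have hc := hT _ ih.2 _ hstep
    exact ⟨ih.1.tail ⟨ih.2, hc, hstep.2.2⟩, hc⟩

theorem connectedDiagram_of_reach (hp : p ∈ D) (h : ∀ q ∈ D, Reach D p q) :
    ConnectedDiagram D :=
  ⟨⟨p, hp⟩, fun a ha b hb => (h a ha).symm.trans (h b hb)⟩

theorem ConnectedDiagram.union (hD : ConnectedDiagram D) (hE : ConnectedDiagram E)
    (ha : a ∈ D) (hb : b ∈ E) (hab : crosses a b ∨ crosses b a) :
    ConnectedDiagram (D ∪ E) := by
  refine connectedDiagram_of_reach (mem_union_right _ hb) fun q hq => Reach.symm ?_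
  rcases mem_union.1 hq with hq | hq
  · exact ((hD.2 q hq a ha).mono subset_union_left).tail
      ⟨mem_union_left _ ha, mem_union_right _ hb, hab⟩
  · exact (hE.2 q hq b hb).mono subset_union_right

theorem mem_componentOf {q : ℕ × ℕ} : q ∈ componentOf D p ↔ q ∈ D ∧ Reach D p q :=
  mem_filter

theorem componentOf_subset : componentOf D p ⊆ D :=
  filter_subset _ _

theorem mem_componentOf_of_step {q q' : ℕ × ℕ} (hq : q ∈ componentOf D p)
    (h : Step D q q') : q' ∈ componentOf D p :=
  mem_componentOf.2 ⟨h.2.1, (mem_componentOf.1 hq).2.tail h⟩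

theorem self_mem_componentOf (hp : p ∈ D) : p ∈ componentOf D p :=
  mem_componentOf.2 ⟨hp, .refl⟩

theorem connectedDiagram_componentOf (hp : p ∈ D) : ConnectedDiagram (componentOf D p) :=
  connectedDiagram_of_reach (self_mem_componentOf hp) fun _ hq =>
    (Reach.restrict (fun _ hx _ => mem_componentOf_of_step hx) (self_mem_componentOf hp)
      (mem_componentOf.1 hq).2).1

/-- A walk from `r` leaves the component of `r` in `D.erase s` only through `s`. -/
theorem connectedDiagram_sdiff_componentOf {r s : ℕ × ℕ} (hD : ConnectedDiagram D)
    (hs : s ∈ D) (hr : r ∈ D.erase s) :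
    ConnectedDiagram (D \ componentOf (D.erase s) r) := by
  set K := componentOf (D.erase s) r
  have hsK : s ∉ K := fun h => (mem_erase.1 (componentOf_subset h)).1 rfl
  have key : ∀ x, Reach D r x → x ∈ K ∨ Reach (D \ K) s x := by
    intro x hx
    induction hx with
    | refl => exact .inl (self_mem_componentOf hr)
    | @tail y z _ hstep ih =>
      by_cases hzK : z ∈ K
      · exact .inl hzK
      by_cases hzs : z = s
      · exact .inr (hzs ▸ .refl)
      by_cases hyK : y ∈ K
      · exact (hzK (mem_componentOf_of_step hyK
          ⟨componentOf_subset hyK, mem_erase.2 ⟨hzs, hstep.2.1⟩, hstep.2.2⟩)).elim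
      exact .inr ((ih.resolve_left hyK).tail
        ⟨mem_sdiff.2 ⟨hstep.1, hyK⟩, mem_sdiff.2 ⟨hstep.2.1, hzK⟩, hstep.2.2⟩)
  refine connectedDiagram_of_reach (mem_sdiff.2 ⟨hs, hsK⟩) fun q hq => ?_
  exact (key q (hD.2 r (mem_of_mem_erase hr) q (mem_sdiff.1 hq).1)).resolve_left
    (mem_sdiff.1 hq).2

end Reachability

section Points

variable {D E E₁ E₂ : Finset (ℕ × ℕ)} {p q : ℕ × ℕ} {x : ℕ}

theorem mem_points : x ∈ points D ↔ ∃ p ∈ D, p.1 = x ∨ p.2 = x := by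
  simp only [points, mem_biUnion, mem_insert, mem_singleton, eq_comm]

theorem fst_mem_points (hp : p ∈ D) : p.1 ∈ points D :=
  mem_points.2 ⟨p, hp, .inl rfl⟩

theorem snd_mem_points (hp : p ∈ D) : p.2 ∈ points D :=
  mem_points.2 ⟨p, hp, .inr rfl⟩

theorem points_union : points (D ∪ E) = points D ∪ points E :=
  union_biUnion

theorem points_mono (h : E ⊆ D) : points E ⊆ points D :=
  biUnion_subset_biUnion_of_subset_left _ h

theorem IsMatching.subset (hM : IsMatching D) (h : E ⊆ D) : IsMatching E :=
  ⟨fun p hp => hM.1 p (h hp), fun p hp q hq hne => hM.2 p (h hp) q (h hq) hne⟩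

theorem IsMatching.card_points (hM : IsMatching D) : #(points D) = 2 * #D := by
  rw [points, card_biUnion, sum_const_nat fun p hp => card_pair (hM.1 p hp).ne, mul_comm]
  intro p hp q hq hne
  have := hM.2 p hp q hq hne
  simp only [disjoint_insert_left, mem_insert, mem_singleton, disjoint_singleton_left]
  tauto

theorem IsMatching.union (h₁ : IsMatching E₁) (h₂ : IsMatching E₂)
    (h : Disjoint (points E₁) (points E₂)) : IsMatching (E₁ ∪ E₂) := by
  have hne : ∀ p ∈ E₁, ∀ q ∈ E₂, p.1 ≠ q.1 ∧ p.1 ≠ q.2 ∧ p.2 ≠ q.1 ∧ p.2 ≠ q.2 := by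
    intro p hp q hq
    have key : ∀ x ∈ points E₁, ∀ y ∈ points E₂, x ≠ y := fun x hx y hy hxy =>
      disjoint_left.1 h hx (hxy ▸ hy)
    exact ⟨key _ (fst_mem_points hp) _ (fst_mem_points hq),
      key _ (fst_mem_points hp) _ (snd_mem_points hq),
      key _ (snd_mem_points hp) _ (fst_mem_points hq),
      key _ (snd_mem_points hp) _ (snd_mem_points hq)⟩
  refine ⟨fun p hp => (mem_union.1 hp).elim (h₁.1 p) (h₂.1 p), fun p hp q hq hpq => ?_⟩
  rcases mem_union.1 hp with hp | hp <;> rcases mem_union.1 hq with hq | hq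
  · exact h₁.2 p hp q hq hpq
  · exact hne p hp q hq
  · have := hne q hq p hp
    exact ⟨this.1.symm, this.2.2.1.symm, this.2.1.symm, this.2.2.2.symm⟩
  · exact h₂.2 p hp q hq hpq

theorem IsMatching.disjoint_points (hM : IsMatching D) (h₁ : E₁ ⊆ D) (h₂ : E₂ ⊆ D)
    (h : Disjoint E₁ E₂) : Disjoint (points E₁) (points E₂) := by
  refine disjoint_left.2 fun x hx₁ hx₂ => ?_
  obtain ⟨p, hp, hpx⟩ := mem_points.1 hx₁
  obtain ⟨q, hq, hqx⟩ := mem_points.1 hx₂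
  have := hM.2 p (h₁ hp) q (h₂ hq) fun hpq => disjoint_left.1 h hp (hpq ▸ hq)
  omega

end Points

section Barrier

variable {D : Finset (ℕ × ℕ)} {I : Set ℕ}

theorem fst_mem_or_snd_mem_of_crosses (hI : I.OrdConnected) {p q : ℕ × ℕ} (hp₁ : p.1 ∈ I)
    (hp₂ : p.2 ∈ I) (h : crosses p q ∨ crosses q p) : q.1 ∈ I ∨ q.2 ∈ I := by
  rcases h with ⟨h₁, h₂, -⟩ | ⟨-, h₁, h₂⟩
  · exact .inl (hI.out hp₁ hp₂ ⟨h₁.le, h₂.le⟩)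
  · exact .inr (hI.out hp₁ hp₂ ⟨h₁.le, h₂.le⟩)

theorem Reach.fst_mem_of_ordConnected (hI : I.OrdConnected)
    (hD : ∀ p ∈ D, p.1 ∈ I ↔ p.2 ∈ I) {a b : ℕ × ℕ} (h : Reach D a b) (ha : a.1 ∈ I) :
    b.1 ∈ I := by
  induction h with
  | refl => exact ha
  | tail _ hstep ih =>
    obtain ⟨hb, hc, hcross⟩ := hstep
    exact (fst_mem_or_snd_mem_of_crosses hI ih ((hD _ hb).1 ih) hcross).elim id (hD _ hc).2

theorem ConnectedDiagram.mem_of_ordConnected (hD : ConnectedDiagram D) (hI : I.OrdConnected)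
    (hDI : ∀ p ∈ D, p.1 ∈ I ↔ p.2 ∈ I) {x y : ℕ} (hx : x ∈ points D) (hy : y ∈ points D)
    (hxI : x ∈ I) : y ∈ I := by
  obtain ⟨p, hp, hpx⟩ := mem_points.1 hx
  obtain ⟨q, hq, hqy⟩ := mem_points.1 hy
  have hp₁ : p.1 ∈ I := by
    rcases hpx with rfl | rfl
    exacts [hxI, (hDI p hp).2 hxI]
  have hq₁ := (hD.2 p hp q hq).fst_mem_of_ordConnected hI hDI hp₁
  rcases hqy with rfl | rfl
  exacts [hq₁, (hDI q hq).1 hq₁]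

theorem ConnectedDiagram.exists_crosses (hD : ConnectedDiagram D) (hM : IsMatching D)
    {c : ℕ × ℕ} (hc₁ : c.1 ∉ points D) (hc₂ : c.2 ∉ points D) {x y : ℕ}
    (hx : x ∈ points D) (hy : y ∈ points D) (hxc : x ∈ Set.Ioo c.1 c.2)
    (hyc : y ∉ Set.Ioo c.1 c.2) : ∃ q ∈ D, crosses q c ∨ crosses c q := by
  by_contra! h
  refine hyc (hD.mem_of_ordConnected Set.ordConnected_Ioo (fun q hq => ?_) hx hy hxc)
  have h₁ : q.1 ≠ c.1 := fun e => hc₁ (e ▸ fst_mem_points hq)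
  have h₂ : q.2 ≠ c.2 := fun e => hc₂ (e ▸ snd_mem_points hq)
  have := hM.1 q hq
  have := h q hq
  simp only [crosses, Set.mem_Ioo] at this ⊢
  omega

end Barrier

section Relabel

def ConnectedDiagramOn (P : Finset ℕ) (D : Finset (ℕ × ℕ)) : Prop :=
  IsMatching D ∧ points D = P ∧ ConnectedDiagram D

noncomputable def connectedDiagramsOn (P : Finset ℕ) : Finset (Finset (ℕ × ℕ)) :=
  (P ×ˢ P).powerset.filter (ConnectedDiagramOn P)

variable {P Q : Finset ℕ} {D : Finset (ℕ × ℕ)} {f g : ℕ → ℕ}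

theorem ConnectedDiagramOn.fst_mem (hD : ConnectedDiagramOn P D) {p : ℕ × ℕ} (hp : p ∈ D) :
    p.1 ∈ P :=
  hD.2.1 ▸ fst_mem_points hp

theorem ConnectedDiagramOn.snd_mem (hD : ConnectedDiagramOn P D) {p : ℕ × ℕ} (hp : p ∈ D) :
    p.2 ∈ P :=
  hD.2.1 ▸ snd_mem_points hp

theorem ConnectedDiagramOn.exists_fst_eq (hD : ConnectedDiagramOn P D) {x : ℕ} (hx : x ∈ P)
    (hmin : ∀ y ∈ P, x ≤ y) : ∃ p ∈ D, p.1 = x := by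
  obtain ⟨p, hp, hpx | hpx⟩ := mem_points.1 (hD.2.1 ▸ hx)
  · exact ⟨p, hp, hpx⟩
  · have := hmin _ (hD.fst_mem hp)
    have := hD.1.1 p hp
    omega

theorem mem_connectedDiagramsOn : D ∈ connectedDiagramsOn P ↔ ConnectedDiagramOn P D := by
  refine mem_filter.trans ⟨And.right, fun hD => ⟨mem_powerset.2 fun p hp => ?_, hD⟩⟩
  exact mem_product.2 ⟨hD.fst_mem hp, hD.snd_mem hp⟩

theorem c_eq_card (n : ℕ) : c n = #(connectedDiagramsOn (Icc 1 (2 * n))) := by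
  rw [c, ← Set.ncard_coe_finset]
  congr 1
  ext D
  simp only [mem_coe, mem_connectedDiagramsOn, ConnectedDiagramOn, IsDiagramOn, and_assoc]
  rfl

def relabel (f : ℕ → ℕ) (D : Finset (ℕ × ℕ)) : Finset (ℕ × ℕ) :=
  D.image (Prod.map f f)

theorem points_relabel : points (relabel f D) = (points D).image f := by
  simp only [points, relabel, biUnion_image, image_biUnion, image_insert, image_singleton,
    Prod.map_fst, Prod.map_snd]

theorem ConnectedDiagramOn.map (hf : StrictMonoOn f P) (hD : ConnectedDiagramOn P D) :
    ConnectedDiagramOn (P.image f) (relabel f D) := by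
  have hmem : ∀ p ∈ D, p.1 ∈ P ∧ p.2 ∈ P := fun p hp => ⟨hD.fst_mem hp, hD.snd_mem hp⟩
  obtain ⟨hM, hpts, hne, hconn⟩ := hD
  have hcross : ∀ p ∈ D, ∀ q ∈ D,
      (crosses (Prod.map f f p) (Prod.map f f q) ↔ crosses p q) := by
    intro p hp q hq
    simp only [crosses, Prod.map_fst, Prod.map_snd, hf.lt_iff_lt (hmem p hp).1 (hmem q hq).1,
      hf.lt_iff_lt (hmem q hq).1 (hmem p hp).2, hf.lt_iff_lt (hmem p hp).2 (hmem q hq).2]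
  have hstep : ∀ p q, Step D p q → Step (relabel f D) (Prod.map f f p) (Prod.map f f q) :=
    fun p q ⟨hp, hq, h⟩ => ⟨mem_image_of_mem _ hp, mem_image_of_mem _ hq,
      by rwa [hcross p hp q hq, hcross q hq p hp]⟩
  refine ⟨⟨?_, ?_⟩, by rw [points_relabel, hpts], hne.image _, ?_⟩
  · simp only [relabel, forall_mem_image]
    exact fun p hp => hf (hmem p hp).1 (hmem p hp).2 (hM.1 p hp)
  · simp only [relabel, forall_mem_image]
    intro p hp q hq hpq
    have hinj {x y : ℕ} (hx : x ∈ P) (hy : y ∈ P) (hxy : x ≠ y) : f x ≠ f y :=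
      fun h => hxy (hf.injOn hx hy h)
    obtain ⟨h₁, h₂, h₃, h₄⟩ := hM.2 p hp q hq fun h => hpq (h ▸ rfl)
    exact ⟨hinj (hmem p hp).1 (hmem q hq).1 h₁, hinj (hmem p hp).1 (hmem q hq).2 h₂,
      hinj (hmem p hp).2 (hmem q hq).1 h₃, hinj (hmem p hp).2 (hmem q hq).2 h₄⟩
  · simp only [relabel, forall_mem_image]
    exact fun p hp q hq => Relation.ReflTransGen.lift _ hstep _ _ (hconn p hp q hq)

theorem relabel_relabel (hgf : Set.LeftInvOn g f P) (hD : points D = P) :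
    relabel g (relabel f D) = D := by
  rw [relabel, relabel, image_image]
  refine (image_congr fun p hp => ?_).trans image_id
  have hp₁ : g (f p.1) = p.1 := hgf (hD ▸ fst_mem_points hp)
  have hp₂ : g (f p.2) = p.2 := hgf (hD ▸ snd_mem_points hp)
  exact Prod.ext hp₁ hp₂

theorem card_connectedDiagramsOn_eq (hf : StrictMonoOn f P) (hg : StrictMonoOn g Q)
    (hfP : Set.MapsTo f P Q) (hgQ : Set.MapsTo g Q P) (hfg : Set.InvOn g f P Q) :
    #(connectedDiagramsOn P) = #(connectedDiagramsOn Q) := by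
  have himage {P Q : Finset ℕ} {f g : ℕ → ℕ} (hfP : Set.MapsTo f P Q) (hgQ : Set.MapsTo g Q P)
      (hfg : Set.RightInvOn g f Q) : P.image f = Q :=
    Subset.antisymm (image_subset_iff.2 fun x hx => hfP hx)
      fun y hy => mem_image.2 ⟨g y, hgQ hy, hfg hy⟩
  refine card_nbij' (relabel f) (relabel g) (fun D hD => ?_) (fun D hD => ?_) (fun D hD => ?_)
    (fun D hD => ?_)
  · rw [← himage hfP hgQ hfg.2]
    exact mem_connectedDiagramsOn.2 ((mem_connectedDiagramsOn.1 hD).map hf)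
  · rw [← himage hgQ hfP hfg.1]
    exact mem_connectedDiagramsOn.2 ((mem_connectedDiagramsOn.1 hD).map hg)
  · exact relabel_relabel hfg.1 (mem_connectedDiagramsOn.1 hD).2.1
  · exact relabel_relabel hfg.2 (mem_connectedDiagramsOn.1 hD).2.1

end Relabel

theorem c_one : c 1 = 1 := by
  rw [c_eq_card, card_eq_one]
  refine ⟨{(1, 2)}, eq_singleton_iff_unique_mem.2 ⟨mem_connectedDiagramsOn.2 ?_, ?_⟩⟩
  · refine ⟨⟨by simp, by simp⟩, by decide, singleton_nonempty _, ?_⟩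
    simp only [mem_singleton]
    rintro p rfl q rfl
    exact .refl
  · intro D hD
    obtain ⟨hM, hpts, hne, -⟩ := mem_connectedDiagramsOn.1 hD
    refine eq_singleton_iff_nonempty_unique_mem.2 ⟨hne, fun p hp => ?_⟩
    have h₁ := hpts ▸ fst_mem_points hp
    have h₂ := hpts ▸ snd_mem_points hp
    have := hM.1 p hp
    simp only [mem_Icc] at h₁ h₂
    exact Prod.ext (by omega) (by omega)

section Blocks

def blockPoints (p m : ℕ) : Finset ℕ :=
  insert 2 (Icc (p + 2) (p + 2 * m))

def rootPoints (n p m : ℕ) : Finset ℕ :=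
  Icc 1 (2 * n) \ blockPoints p m

variable {n p m x : ℕ}

theorem mem_blockPoints : x ∈ blockPoints p m ↔ x = 2 ∨ p + 2 ≤ x ∧ x ≤ p + 2 * m := by
  simp [blockPoints]

theorem mem_rootPoints (hp : 2 ≤ p) (hm : 1 ≤ m) (hpm : p + 2 * m ≤ 2 * n) :
    x ∈ rootPoints n p m ↔ x = 1 ∨ 3 ≤ x ∧ x ≤ p + 1 ∨ p + 2 * m + 1 ≤ x ∧ x ≤ 2 * n := by
  simp only [rootPoints, mem_sdiff, mem_Icc, mem_blockPoints]
  omega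

theorem card_connectedDiagramsOn_blockPoints (hp : 2 ≤ p) (hm : 1 ≤ m) :
    #(connectedDiagramsOn (blockPoints p m)) = c m := by
  rw [c_eq_card]
  refine card_connectedDiagramsOn_eq (f := fun y => if y = 2 then 1 else y - p)
    (g := fun x => if x = 1 then 2 else x + p) ?_ ?_ ?_ ?_ ⟨?_, ?_⟩ <;>
  · intro x hx
    try intro y hy hxy
    simp only [mem_coe, mem_blockPoints, mem_Icc] at *
    split_ifs <;> omega

theorem card_connectedDiagramsOn_rootPoints (hp : 2 ≤ p) (hm : 1 ≤ m)
    (hpm : p + 2 * m ≤ 2 * n) :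
    #(connectedDiagramsOn (rootPoints n p m)) = c (n - m) := by
  rw [c_eq_card]
  refine card_connectedDiagramsOn_eq
    (f := fun x => if x = 1 then 1 else if x ≤ p + 1 then x - 1 else x - 2 * m)
    (g := fun x => if x = 1 then 1 else if x ≤ p then x + 1 else x + 2 * m)
    ?_ ?_ ?_ ?_ ⟨?_, ?_⟩ <;>
  · intro x hx
    try intro y hy hxy
    simp only [mem_coe, mem_rootPoints hp hm hpm, mem_Icc] at *
    split_ifs <;> omega

end Blocks

section Gluing

variable {n p m : ℕ} {P Q : Finset ℕ} {E E₁ E₂ F : Finset (ℕ × ℕ)}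

theorem ConnectedDiagramOn.disjoint (h₁ : ConnectedDiagramOn P E₁)
    (h₂ : ConnectedDiagramOn Q E₂) (hPQ : Disjoint P Q) : Disjoint E₁ E₂ :=
  disjoint_left.2 fun _ hq₁ hq₂ => disjoint_left.1 hPQ (h₁.fst_mem hq₁) (h₂.fst_mem hq₂)

theorem disjoint_rootPoints_blockPoints : Disjoint (rootPoints n p m) (blockPoints p m) :=
  sdiff_disjoint

theorem ConnectedDiagramOn.exists_fst_eq_two_of_blockPoints
    (h : ConnectedDiagramOn (blockPoints p m) E) : ∃ s ∈ E, s.1 = 2 :=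
  h.exists_fst_eq (mem_blockPoints.2 (.inl rfl)) fun y hy => by
    rw [mem_blockPoints] at hy
    omega

theorem ConnectedDiagramOn.exists_fst_eq_one (h : ConnectedDiagramOn (Icc 1 (2 * n)) E)
    (hn : 1 ≤ n) : ∃ r ∈ E, r.1 = 1 :=
  h.exists_fst_eq (mem_Icc.2 ⟨le_rfl, by omega⟩) fun y hy => (mem_Icc.1 hy).1

theorem ConnectedDiagramOn.union_rootPoints (hp : 2 ≤ p) (hm : 1 ≤ m)
    (hpm : p + 2 * m ≤ 2 * n) (h₁ : ConnectedDiagramOn (rootPoints n p m) E₁)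
    (h₂ : ConnectedDiagramOn (blockPoints p m) E₂) :
    ConnectedDiagramOn (Icc 1 (2 * n)) (E₁ ∪ E₂) := by
  obtain ⟨s, hs, hs₁⟩ := h₂.exists_fst_eq_two_of_blockPoints
  obtain ⟨hM₁, hpts₁, hconn₁⟩ := h₁
  obtain ⟨hM₂, hpts₂, hconn₂⟩ := h₂
  have hs₂ : p + 2 ≤ s.2 ∧ s.2 ≤ p + 2 * m := by
    have := mem_blockPoints.1 (hpts₂ ▸ snd_mem_points hs)
    have := hM₂.1 s hs
    omega
  have hroot {x : ℕ} (hx : x = 1 ∨ 3 ≤ x ∧ x ≤ p + 1 ∨ p + 2 * m + 1 ≤ x ∧ x ≤ 2 * n) :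
      x ∈ points E₁ := hpts₁ ▸ (mem_rootPoints hp hm hpm).2 hx
  have hblock {x : ℕ} (hx : x ∈ points E₂) : x ∉ points E₁ :=
    disjoint_right.1 (hpts₁ ▸ hpts₂ ▸ disjoint_rootPoints_blockPoints) hx
  -- the root component has the point `3` below `s` and the point `1` outside it
  obtain ⟨f, hf, hfs⟩ := hconn₁.exists_crosses hM₁ (hblock (fst_mem_points hs))
    (hblock (snd_mem_points hs)) (hroot (x := 3) (by omega)) (hroot (x := 1) (.inl rfl))
    (by simp only [Set.mem_Ioo]; omega) (by simp only [Set.mem_Ioo]; omega)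
  have hsub : blockPoints p m ⊆ Icc 1 (2 * n) := fun x hx => by
    rw [mem_blockPoints] at hx
    rw [mem_Icc]
    omega
  refine ⟨hM₁.union hM₂ (hpts₁ ▸ hpts₂ ▸ disjoint_rootPoints_blockPoints), ?_,
    hconn₁.union hconn₂ hf hs hfs⟩
  rw [points_union, hpts₁, hpts₂, rootPoints, sdiff_union_of_subset hsub]

theorem componentOf_union_eq {r : ℕ × ℕ} (hE : ConnectedDiagram E) (hr : r ∈ E)
    (hEF : ∀ y ∈ E, ∀ z ∈ F, ¬(crosses y z ∨ crosses z y)) : componentOf (E ∪ F) r = E := by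
  ext x
  refine mem_componentOf.trans ⟨fun ⟨_, h⟩ => (h.restrict (fun y hy z hz => ?_) hr).2,
    fun hx => ⟨mem_union_left _ hx, (hE.2 r hr x hx).mono subset_union_left⟩⟩
  exact (mem_union.1 hz.2.1).resolve_right fun hzF => hEF y hy z hzF hz.2.2

theorem eq_componentOf_erase (hp : 2 ≤ p) (hm : 1 ≤ m) (hpm : p + 2 * m ≤ 2 * n)
    (h₁ : ConnectedDiagramOn (rootPoints n p m) E₁)
    (h₂ : ConnectedDiagramOn (blockPoints p m) E₂) {r s : ℕ × ℕ} (hr : r ∈ E₁ ∪ E₂)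
    (hr₁ : r.1 = 1) (hs : s ∈ E₁ ∪ E₂) (hs₁ : s.1 = 2) :
    E₁ = componentOf ((E₁ ∪ E₂).erase s) r := by
  have hrE₁ : r ∈ E₁ := (mem_union.1 hr).resolve_right fun h => by
    have := mem_blockPoints.1 (hr₁ ▸ h₂.fst_mem h)
    omega
  have hsE₁ : s ∉ E₁ := fun h => by
    have := (mem_rootPoints hp hm hpm).1 (hs₁ ▸ h₁.fst_mem h)
    omega
  rw [erase_union_distrib, erase_eq_of_notMem hsE₁, componentOf_union_eq h₁.2.2 hrE₁]
  -- the chords of `E₂` other than `s` live in the interval `[p + 2, p + 2m]`, avoided by `E₁`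
  intro y hy z hz hyz
  have hz₂ := mem_of_mem_erase hz
  have hzs := h₂.1.2 z hz₂ s ((mem_union.1 hs).resolve_left hsE₁) (ne_of_mem_erase hz)
  have hz₁ := mem_blockPoints.1 (h₂.fst_mem hz₂)
  have hz₂' := mem_blockPoints.1 (h₂.snd_mem hz₂)
  have hy₁ := (mem_rootPoints hp hm hpm).1 (h₁.fst_mem hy)
  have hy₂ := (mem_rootPoints hp hm hpm).1 (h₁.snd_mem hy)
  have := fst_mem_or_snd_mem_of_crosses (I := Set.Icc (p + 2) (p + 2 * m))
    Set.ordConnected_Icc (by simp only [Set.mem_Icc]; omega) (by simp only [Set.mem_Icc]; omega)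
    hyz.symm
  simp only [Set.mem_Icc] at this
  omega

theorem blockPoints_inj {p' m' : ℕ} (hm : 1 ≤ m) (hm' : 1 ≤ m') (hp : 2 ≤ p) (hp' : 2 ≤ p')
    (h : blockPoints p m = blockPoints p' m') : p = p' ∧ m = m' := by
  have key (x : ℕ) := (mem_blockPoints (x := x)).symm.trans (h ▸ mem_blockPoints)
  have := key (p + 2)
  have := key (p' + 2)
  have := key (p + 2 * m)
  have := key (p' + 2 * m')
  omega

theorem union_rootPoints_injective {p' m' : ℕ} {E₁' E₂' : Finset (ℕ × ℕ)} (hp : 2 ≤ p)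
    (hm : 1 ≤ m) (hpm : p + 2 * m ≤ 2 * n) (h₁ : ConnectedDiagramOn (rootPoints n p m) E₁)
    (h₂ : ConnectedDiagramOn (blockPoints p m) E₂) (hp' : 2 ≤ p') (hm' : 1 ≤ m')
    (hpm' : p' + 2 * m' ≤ 2 * n) (h₁' : ConnectedDiagramOn (rootPoints n p' m') E₁')
    (h₂' : ConnectedDiagramOn (blockPoints p' m') E₂') (h : E₁ ∪ E₂ = E₁' ∪ E₂') :
    p = p' ∧ m = m' ∧ E₁ = E₁' ∧ E₂ = E₂' := by
  obtain ⟨r, hr, hr₁⟩ := (h₁.union_rootPoints hp hm hpm h₂).exists_fst_eq_one (by omega)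
  obtain ⟨s, hs, hs₁⟩ := h₂.exists_fst_eq_two_of_blockPoints
  have hE₁ : E₁ = E₁' := by
    rw [eq_componentOf_erase hp hm hpm h₁ h₂ hr hr₁ (mem_union_right _ hs) hs₁,
      eq_componentOf_erase hp' hm' hpm' h₁' h₂' (h ▸ hr) hr₁ (h ▸ mem_union_right _ hs) hs₁, h]
  have hE₂ : E₂ = E₂' := by
    rw [← union_sdiff_cancel_left (h₁.disjoint h₂ disjoint_rootPoints_blockPoints),
      ← union_sdiff_cancel_left (h₁'.disjoint h₂' disjoint_rootPoints_blockPoints), h, hE₁]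
  obtain ⟨rfl, rfl⟩ := blockPoints_inj hm hm' hp hp' (by rw [← h₂.2.1, ← h₂'.2.1, hE₂])
  exact ⟨rfl, rfl, hE₁, hE₂⟩

end Gluing

section Splitting

/-- The shape of a connected diagram after deleting its chord `s` at the point `2`, with `E₁`
the component of the chord at `1`. -/
structure IsSplit (E₁ E₂ : Finset (ℕ × ℕ)) (s : ℕ × ℕ) : Prop where
  matching₁ : IsMatching E₁
  matching₂ : IsMatching E₂
  connected₁ : ConnectedDiagram E₁
  connected₂ : ConnectedDiagram E₂
  disjoint : Disjoint (points E₁) (points E₂)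
  one_mem : 1 ∈ points E₁
  two_le : ∀ x ∈ points E₂, 2 ≤ x
  mem : s ∈ E₂
  fst_eq : s.1 = 2
  not_crosses : ∀ y ∈ E₁, ∀ z ∈ E₂.erase s, ¬(crosses y z ∨ crosses z y)

variable {n : ℕ} {D E₁ E₂ : Finset (ℕ × ℕ)} {r s : ℕ × ℕ}

theorem isSplit_componentOf_erase (hD : ConnectedDiagramOn (Icc 1 (2 * n)) D) (hr : r ∈ D)
    (hr₁ : r.1 = 1) (hs : s ∈ D) (hs₁ : s.1 = 2) :
    IsSplit (componentOf (D.erase s) r) (D \ componentOf (D.erase s) r) s := by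
  set K := componentOf (D.erase s) r
  have hrs : r ∈ D.erase s := mem_erase.2 ⟨fun h => by rw [h] at hr₁; omega, hr⟩
  have hKD : K ⊆ D := componentOf_subset.trans (erase_subset _ _)
  have hdisj := hD.1.disjoint_points hKD sdiff_subset disjoint_sdiff
  have hone : 1 ∈ points K := hr₁ ▸ fst_mem_points (self_mem_componentOf hrs)
  refine ⟨hD.1.subset hKD, hD.1.subset sdiff_subset, connectedDiagram_componentOf hrs,
    connectedDiagram_sdiff_componentOf hD.2.2 hs hrs, hdisj, hone, fun x hx => ?_,
    mem_sdiff.2 ⟨hs, fun h => (mem_erase.1 (componentOf_subset h)).1 rfl⟩, hs₁,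
    fun y hy z hz hyz => ?_⟩
  · have h₁ := mem_Icc.1 (hD.2.1 ▸ points_mono sdiff_subset hx)
    have h₂ : x ≠ 1 := fun h => disjoint_left.1 hdisj hone (h ▸ hx)
    omega
  · have hzD := mem_sdiff.1 (mem_of_mem_erase hz)
    exact hzD.2 (mem_componentOf_of_step hy
      ⟨componentOf_subset hy, mem_erase.2 ⟨ne_of_mem_erase hz, hzD.1⟩, hyz⟩)

namespace IsSplit

theorem snd_lt_of_fst_lt (h : IsSplit E₁ E₂ s) {w : ℕ} (hw : w ∈ points E₁) {z : ℕ × ℕ}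
    (hz : z ∈ E₂.erase s) (hzw : z.1 < w) : z.2 < w := by
  have hz₂ := mem_of_mem_erase hz
  have hz₁ := h.two_le _ (fst_mem_points hz₂)
  have hwz : z.2 ≠ w := fun e => disjoint_left.1 h.disjoint hw (e ▸ snd_mem_points hz₂)
  by_contra hzw'
  -- `E₁` has points on both sides of the chord `z`, so it crosses `z`
  obtain ⟨y, hy, hyz⟩ := h.connected₁.exists_crosses h.matching₁
    (disjoint_right.1 h.disjoint (fst_mem_points hz₂))
    (disjoint_right.1 h.disjoint (snd_mem_points hz₂)) hw h.one_mem
    (by simp only [Set.mem_Ioo]; omega) (by simp only [Set.mem_Ioo]; omega)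
  exact h.not_crosses y hy z hz hyz

theorem not_mem_points_of_lt_of_lt (h : IsSplit E₁ E₂ s) {a b w : ℕ} (ha : a ∈ points E₂)
    (ha₂ : a ≠ 2) (hb : b ∈ points E₂) (haw : a < w) (hwb : w < b) : w ∉ points E₁ := by
  intro hw
  have hw₂ : w ∉ points E₂ := disjoint_left.1 h.disjoint hw
  have ha₃ := h.two_le a ha
  have hside : ∀ z ∈ E₂, z.1 = 2 ∧ z.2 = s.2 ∨
      2 < z.1 ∧ z.1 < z.2 ∧ z.1 ≠ w ∧ z.2 ≠ w ∧ (z.1 < w → z.2 < w) := by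
    intro z hz
    by_cases hzs : z = s
    · exact .inl ⟨hzs ▸ h.fst_eq, hzs ▸ rfl⟩
    have hne := h.matching₂.2 z hz s h.mem hzs
    have := h.two_le _ (fst_mem_points hz)
    have := h.matching₂.1 z hz
    have h₁ : z.1 ≠ w := fun e => hw₂ (e ▸ fst_mem_points hz)
    have h₂ : z.2 ≠ w := fun e => hw₂ (e ▸ snd_mem_points hz)
    have := h.snd_lt_of_fst_lt hw (z := z) (mem_erase.2 ⟨hzs, hz⟩)
    rw [h.fst_eq] at hne
    omega
  have hsw : s.2 ≠ w := fun e => hw₂ (e ▸ snd_mem_points h.mem)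
  have hs₂ : s.1 ∈ points E₂ := fst_mem_points h.mem
  rcases lt_or_gt_of_ne hsw with hsw | hsw
  · -- all of `E₂` lies on one side of `w`, but `s` is left of it and `b` right of it
    have := h.connected₂.mem_of_ordConnected Set.ordConnected_Ioi
      (fun q hq => by have := hside q hq; simp only [Set.mem_Ioi]; omega) hb hs₂ hwb
    rw [Set.mem_Ioi, h.fst_eq] at this
    omega
  · -- all of `E₂` lies inside or outside `(2, w)`, but `a` is inside and `s` is not
    have := h.connected₂.mem_of_ordConnected (I := Set.Ioo 2 w) Set.ordConnected_Ioo
      (fun q hq => by have := hside q hq; simp only [Set.mem_Ioo]; omega) ha hs₂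
      (by simp only [Set.mem_Ioo]; omega)
    rw [Set.mem_Ioo, h.fst_eq] at this
    omega

theorem three_not_mem_points (h : IsSplit E₁ E₂ s) (hD : ConnectedDiagram (E₁ ∪ E₂)) {b : ℕ}
    (hb : b ∈ points E₂) (hbmax : ∀ x ∈ points E₂, x ≤ b) : 3 ∉ points E₂ := by
  intro h₃
  -- then `E₂` fills `[2, b]` and `E₁` avoids it, so no chord joins the two parts
  have hin : ∀ x ∈ points E₂, x ∈ Set.Icc 2 b := fun x hx => ⟨h.two_le x hx, hbmax x hx⟩
  have hout : ∀ x ∈ points E₁, x ∉ Set.Icc 2 b := by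
    rintro x hx ⟨hx₂, hxb⟩
    have hx' := disjoint_left.1 h.disjoint hx
    have h₂ : x ≠ 2 := fun e => hx' (e ▸ h.fst_eq ▸ fst_mem_points h.mem)
    have h₃' : x ≠ 3 := fun e => hx' (e ▸ h₃)
    have hb' : x ≠ b := fun e => hx' (e ▸ hb)
    exact h.not_mem_points_of_lt_of_lt (w := x) h₃ (by decide) hb (by omega) (by omega) hx
  have hs := fst_mem_points h.mem
  have := hD.mem_of_ordConnected Set.ordConnected_Icc (fun q hq => ?_)
    (points_union ▸ mem_union_right _ hs) (points_union ▸ mem_union_left _ h.one_mem)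
    (hin _ hs)
  · exact hout 1 h.one_mem this
  rcases mem_union.1 hq with hq | hq
  · exact iff_of_false (hout _ (fst_mem_points hq)) (hout _ (snd_mem_points hq))
  · exact iff_of_true (hin _ (fst_mem_points hq)) (hin _ (snd_mem_points hq))

theorem exists_points_eq_blockPoints (h : IsSplit E₁ E₂ s) (hD : ConnectedDiagram (E₁ ∪ E₂))
    (hcover : points E₁ ∪ points E₂ = Icc 1 (2 * n)) :
    ∃ p, 2 ≤ p ∧ p + 2 * #E₂ ≤ 2 * n ∧ points E₂ = blockPoints p #E₂ := by
  have h₂ : 2 ∈ points E₂ := h.fst_eq ▸ fst_mem_points h.mem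
  set S := (points E₂).erase 2
  have hS : S.Nonempty := by
    refine ⟨s.2, mem_erase.2 ⟨?_, snd_mem_points h.mem⟩⟩
    have := h.matching₂.1 s h.mem
    rw [h.fst_eq] at this
    omega
  set a := S.min' hS
  set b := S.max' hS
  obtain ⟨ha₂, ha⟩ := mem_erase.1 (S.min'_mem hS)
  obtain ⟨-, hb⟩ := mem_erase.1 (S.max'_mem hS)
  have hab : a ≤ b := S.min'_le _ (S.max'_mem hS)
  have ha₁ := h.two_le a ha
  have hb₁ : b ≤ 2 * n := (mem_Icc.1 (hcover ▸ mem_union_right _ hb)).2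
  have hSIcc : S = Icc a b := by
    refine Subset.antisymm (fun x hx => mem_Icc.2 ⟨S.min'_le x hx, S.le_max' x hx⟩)
      fun w hw => ?_
    obtain ⟨haw, hwb⟩ := mem_Icc.1 hw
    rcases haw.eq_or_lt with rfl | haw
    · exact S.min'_mem hS
    rcases hwb.eq_or_lt with rfl | hwb
    · exact S.max'_mem hS
    have hw : w ∈ points E₁ ∪ points E₂ := hcover ▸ mem_Icc.2 ⟨by omega, by omega⟩
    refine mem_erase.2 ⟨by omega, (mem_union.1 hw).resolve_left ?_⟩
    exact h.not_mem_points_of_lt_of_lt ha ha₂ hb haw hwb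
  have hbmax : ∀ x ∈ points E₂, x ≤ b := fun x hx => by
    by_cases hx₂ : x = 2
    · omega
    · exact S.le_max' x (mem_erase.2 ⟨hx₂, hx⟩)
  have ha₃ : a ≠ 3 := fun e => h.three_not_mem_points hD hb hbmax (e ▸ ha)
  have hcard : #S = 2 * #E₂ - 1 := by rw [card_erase_of_mem h₂, h.matching₂.card_points]
  rw [hSIcc, Nat.card_Icc] at hcard
  have hE₂ : 1 ≤ #E₂ := card_pos.2 h.connected₂.1
  refine ⟨a - 2, by omega, by omega, ?_⟩
  have hpts : points E₂ = insert 2 (Icc a b) := by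
    rw [← hSIcc]
    exact (insert_erase h₂).symm
  rw [hpts, blockPoints]
  congr 2 <;> omega

end IsSplit

end Splitting

section Decomposition

variable {n : ℕ} {D : Finset (ℕ × ℕ)}

theorem ConnectedDiagramOn.exists_fst_eq_two (hD : ConnectedDiagramOn (Icc 1 (2 * n)) D)
    (hn : 2 ≤ n) : ∃ s ∈ D, s.1 = 2 := by
  have hmem {x : ℕ} (h₁ : 1 ≤ x) (h₂ : x ≤ 2 * n) : x ∈ points D :=
    hD.2.1 ▸ mem_Icc.2 ⟨h₁, h₂⟩
  obtain ⟨s, hs, hs₂ | hs₂⟩ := mem_points.1 (hmem (x := 2) (by omega) (by omega))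
  · exact ⟨s, hs, hs₂⟩
  -- otherwise `s = (1, 2)` crosses no chord, so it is all of `D`
  have hs₁ : s.1 = 1 := by
    have := mem_Icc.1 (hD.fst_mem hs)
    have := hD.1.1 s hs
    omega
  have := hD.2.2.mem_of_ordConnected (I := Set.Icc 1 2) Set.ordConnected_Icc (fun q hq => ?_)
    (fst_mem_points hs) (hmem (x := 3) (by omega) (by omega)) (by simp [hs₁])
  · simp at this
  by_cases hqs : q = s
  · simp [hqs, hs₁, hs₂]
  · have := hD.1.2 q hq s hs hqs
    have := mem_Icc.1 (hD.fst_mem hq)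
    have := hD.1.1 q hq
    simp only [Set.mem_Icc]
    omega

theorem exists_rootPoints_blockPoints (hn : 2 ≤ n) (hD : ConnectedDiagramOn (Icc 1 (2 * n)) D) :
    ∃ m p E₁ E₂, 1 ≤ m ∧ m < n ∧ 2 ≤ p ∧ p + 2 * m ≤ 2 * n ∧
      ConnectedDiagramOn (rootPoints n p m) E₁ ∧ ConnectedDiagramOn (blockPoints p m) E₂ ∧
      E₁ ∪ E₂ = D := by
  obtain ⟨r, hr, hr₁⟩ := hD.exists_fst_eq_one (by omega)
  obtain ⟨s, hs, hs₁⟩ := hD.exists_fst_eq_two hn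
  set E₁ := componentOf (D.erase s) r
  have h : IsSplit E₁ (D \ E₁) s := isSplit_componentOf_erase hD hr hr₁ hs hs₁
  have hunion : E₁ ∪ D \ E₁ = D :=
    union_sdiff_of_subset (componentOf_subset.trans (erase_subset _ _))
  have hcover : points E₁ ∪ points (D \ E₁) = Icc 1 (2 * n) := by
    rw [← points_union, hunion, hD.2.1]
  obtain ⟨p, hp, hpm, hpts₂⟩ :=
    h.exists_points_eq_blockPoints (by rw [hunion]; exact hD.2.2) hcover
  have hcard : #E₁ + #(D \ E₁) = n := by
    have := hD.1.card_points
    rw [hD.2.1, Nat.card_Icc, ← hunion, card_union_of_disjoint disjoint_sdiff] at this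
    omega
  have hE₁ : 0 < #E₁ := card_pos.2 h.connected₁.1
  have hE₂ : 0 < #(D \ E₁) := card_pos.2 h.connected₂.1
  refine ⟨#(D \ E₁), p, E₁, D \ E₁, hE₂, by omega, hp, hpm, ⟨h.matching₁, ?_, h.connected₁⟩,
    ⟨h.matching₂, hpts₂, h.connected₂⟩, hunion⟩
  rw [rootPoints, ← hcover, ← hpts₂, union_sdiff_cancel_right h.disjoint]

noncomputable def decompositions (n : ℕ) :
    Finset ((_ : ℕ) × (_ : ℕ) × (Finset (ℕ × ℕ) × Finset (ℕ × ℕ))) :=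
  (Ico 1 n).sigma fun m => (Icc 2 (2 * (n - m))).sigma fun p =>
    connectedDiagramsOn (rootPoints n p m) ×ˢ connectedDiagramsOn (blockPoints p m)

theorem mem_decompositions {m p : ℕ} {E₁ E₂ : Finset (ℕ × ℕ)} :
    ⟨m, p, E₁, E₂⟩ ∈ decompositions n ↔ (1 ≤ m ∧ m < n) ∧ (2 ≤ p ∧ p ≤ 2 * (n - m)) ∧
      ConnectedDiagramOn (rootPoints n p m) E₁ ∧ ConnectedDiagramOn (blockPoints p m) E₂ := by
  simp only [decompositions, mem_sigma, mem_product, mem_Ico, mem_Icc, mem_connectedDiagramsOn]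

theorem card_decompositions (hn : 2 ≤ n) : #(decompositions n) = c n := by
  rw [c_eq_card]
  refine card_bij (fun x _ => x.2.2.1 ∪ x.2.2.2) ?_ ?_ fun D hD => ?_
  · rintro ⟨m, p, E₁, E₂⟩ hx
    obtain ⟨⟨hm, hmn⟩, ⟨hp, hpm⟩, h₁, h₂⟩ := mem_decompositions.1 hx
    exact mem_connectedDiagramsOn.2 (h₁.union_rootPoints hp hm (by omega) h₂)
  · rintro ⟨m, p, E₁, E₂⟩ hx ⟨m', p', E₁', E₂'⟩ hy hxy
    obtain ⟨⟨hm, hmn⟩, ⟨hp, hpm⟩, h₁, h₂⟩ := mem_decompositions.1 hx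
    obtain ⟨⟨hm', hmn'⟩, ⟨hp', hpm'⟩, h₁', h₂'⟩ := mem_decompositions.1 hy
    obtain ⟨rfl, rfl, rfl, rfl⟩ := union_rootPoints_injective hp hm (by omega) h₁ h₂ hp' hm'
      (by omega) h₁' h₂' hxy
    rfl
  · obtain ⟨m, p, E₁, E₂, hm, hmn, hp, hpm, h₁, h₂, rfl⟩ :=
      exists_rootPoints_blockPoints hn (mem_connectedDiagramsOn.1 hD)
    exact ⟨⟨m, p, E₁, E₂⟩, mem_decompositions.2 ⟨⟨hm, hmn⟩, ⟨hp, by omega⟩, h₁, h₂⟩, rfl⟩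

theorem c_eq_sum (hn : 2 ≤ n) :
    c n = ∑ m ∈ Ico 1 n, (2 * (n - m) - 1) * (c (n - m) * c m) := by
  rw [← card_decompositions hn, decompositions, card_sigma]
  refine sum_congr rfl fun m hm => ?_
  rw [mem_Ico] at hm
  rw [card_sigma, sum_congr rfl fun p hp => ?_, sum_const, Nat.card_Icc, smul_eq_mul]
  · rfl
  · rw [mem_Icc] at hp
    rw [card_product, card_connectedDiagramsOn_rootPoints hp.1 hm.1 (by omega),
      card_connectedDiagramsOn_blockPoints hp.1 hm.1]

end Decomposition

theorem sum_Ico_mul_reflect (f : ℕ → ℕ) (n : ℕ) :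
    ∑ m ∈ Ico 1 n, (2 * (n - m) - 1) * (f (n - m) * f m) =
      (n - 1) * ∑ k ∈ Ico 1 n, f k * f (n - k) := by
  have hreflect : ∑ m ∈ Ico 1 n, (2 * (n - m) - 1) * (f (n - m) * f m) =
      ∑ k ∈ Ico 1 n, (2 * k - 1) * (f k * f (n - k)) := by
    have := sum_Ico_reflect (fun k => (2 * k - 1) * (f k * f (n - k))) 1 (Nat.le_succ n)
    rw [Nat.add_sub_cancel_left, Nat.add_sub_cancel] at this
    rw [← this]
    refine sum_congr rfl fun m hm => ?_
    rw [Nat.sub_sub_self (mem_Ico.1 hm).2.le]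
  suffices 2 * ∑ m ∈ Ico 1 n, (2 * (n - m) - 1) * (f (n - m) * f m) =
      2 * ((n - 1) * ∑ k ∈ Ico 1 n, f k * f (n - k)) by omega
  calc 2 * ∑ m ∈ Ico 1 n, (2 * (n - m) - 1) * (f (n - m) * f m)
      = ∑ k ∈ Ico 1 n, ((2 * k - 1) + (2 * (n - k) - 1)) * (f k * f (n - k)) := by
        rw [two_mul]
        nth_rw 1 [hreflect]
        rw [← sum_add_distrib]
        exact sum_congr rfl fun k _ => by rw [add_mul, mul_comm (f (n - k))]
    _ = ∑ k ∈ Ico 1 n, (2 * (n - 1)) * (f k * f (n - k)) :=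
        sum_congr rfl fun k hk => by rw [mem_Ico] at hk; congr 1; omega
    _ = 2 * ((n - 1) * ∑ k ∈ Ico 1 n, f k * f (n - k)) := by
        rw [← mul_sum, mul_assoc]

/-- `c 1 = 1` and, for `n ≥ 2`,
`c n = (n-1) · Σ_{k=1}^{n-1} c k · c (n-k)`. -/
theorem stmt0 :
    c 1 = 1 ∧ ∀ n : ℕ, 2 ≤ n →
      c n = (n - 1) * ∑ k ∈ Finset.Ico 1 n, c k * c (n - k) := by
  exact ⟨c_one, fun n hn => (c_eq_sum hn).trans (sum_Ico_mul_reflect c n)⟩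

end ChordStmt
end

section
/- For all n ≥ 5, the sequence c_n defined by c_1 = 1 and c_n = (n-1) Σ_{k=1}^{n-1} c_k c_{n-k} satisfies (2n-1) · c_{n-1} < c_n < 2n · c_{n-1}. -/
/-!
Splitting off the terms `k = 1, 2, n - 2, n - 1` of the convolution gives
`c n = (n - 1) (2 c (n - 1) + 2 c (n - 2) + T n)` with `T n = ∑_{k=3}^{n-3} c k c (n - k)`, so the
lower bound at `n` follows from the upper bound at `n - 1`. The upper bound holds as soon as `T n`
is small compared with `c (n - 1)`. Applying the upper bound to the factor `c (n + 1 - k)` and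
symmetrising `k ↔ n - k` gives `T (n + 1) ≤ (n + 2) T n + c 3 c (n - 2)`; together with the easy
growth `c (m + 1) ≥ 2 m c m` this propagates `T n ≤ 16 c (n - 3)` from `n = 13` on, the cases
`6 ≤ n ≤ 13` being checked numerically. Since `T n` only involves the upper bound at indices
`≤ n - 3`, the upper bound follows by strong induction.
-/

open Finset

def middleSum (c : ℕ → ℕ) (n : ℕ) : ℕ := ∑ k ∈ Ico 3 (n - 2), c k * c (n - k)

lemma two_mul_sum_sub_mul_middleSum (c : ℕ → ℕ) (n : ℕ) :
    2 * ∑ k ∈ Ico 3 (n - 2), (n - k) * (c k * c (n - k)) = n * middleSum c n := by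
  have reflect : ∑ k ∈ Ico 3 (n - 2), (n - k) * (c k * c (n - k))
      = ∑ k ∈ Ico 3 (n - 2), k * (c k * c (n - k)) := by
    refine sum_nbij' (n - ·) (n - ·) ?_ ?_ ?_ ?_ ?_ <;> intro k hk <;>
      simp only [mem_Ico] at hk ⊢ <;> try omega
    rw [Nat.sub_sub_self (by omega), mul_comm (c k)]
  calc 2 * ∑ k ∈ Ico 3 (n - 2), (n - k) * (c k * c (n - k))
      = ∑ k ∈ Ico 3 (n - 2), ((n - k) + k) * (c k * c (n - k)) := by
        rw [two_mul]; nth_rw 2 [reflect]; rw [← sum_add_distrib]; simp only [add_mul]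
    _ = n * middleSum c n := by
        rw [middleSum, mul_sum]
        refine sum_congr rfl fun k hk => ?_
        rw [Nat.sub_add_cancel (by simp only [mem_Ico] at hk; omega)]

lemma middleSum_succ_le (c : ℕ → ℕ) {n : ℕ} (hn : 5 ≤ n)
    (hU : ∀ m, 4 ≤ m → m ≤ n - 2 → c m ≤ 2 * m * c (m - 1)) :
    middleSum c (n + 1) ≤ (n + 2) * middleSum c n + c 3 * c (n - 2) := by
  have split : middleSum c (n + 1)
      = ∑ k ∈ Ico 3 (n - 2), c k * c (n + 1 - k) + c 3 * c (n - 2) := by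
    rw [middleSum, show n + 1 - 2 = n - 2 + 1 by omega, sum_Ico_succ_top (by omega),
      show n + 1 - (n - 2) = 3 by omega, mul_comm (c (n - 2))]
  rw [split]
  gcongr
  calc ∑ k ∈ Ico 3 (n - 2), c k * c (n + 1 - k)
      ≤ ∑ k ∈ Ico 3 (n - 2), (2 * (n - k) + 2) * (c k * c (n - k)) := by
        refine sum_le_sum fun k hk => ?_
        simp only [mem_Ico] at hk
        have := hU (n + 1 - k) (by omega) (by omega)
        rw [show n + 1 - k - 1 = n - k by omega, show 2 * (n + 1 - k) = 2 * (n - k) + 2 by omega]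
          at this
        calc c k * c (n + 1 - k) ≤ c k * ((2 * (n - k) + 2) * c (n - k)) := by gcongr
          _ = _ := by ring
    _ = (n + 2) * middleSum c n := by
        simp only [add_mul, sum_add_distrib, mul_assoc, ← mul_sum,
          two_mul_sum_sub_mul_middleSum]
        rfl

namespace ChordRecurrence

variable (c : ℕ → ℕ) (h1 : c 1 = 1)
  (hrec : ∀ n : ℕ, 2 ≤ n → c n = (n - 1) * ∑ k ∈ Ico 1 n, c k * c (n - k))

include h1 hrec

lemma pos {n : ℕ} (hn : 0 < n) : 0 < c n := by
  induction n using Nat.strong_induction_on with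
  | _ n ih =>
    obtain rfl | hgt := (Nat.one_le_iff_ne_zero.2 hn.ne').eq_or_lt
    · simp [h1]
    rw [hrec n hgt]
    refine Nat.mul_pos (by omega) (sum_pos' (fun _ _ => Nat.zero_le _) ⟨1, ?_, ?_⟩)
    · simp only [mem_Ico]; omega
    · simpa [h1] using ih (n - 1) (by omega) (by omega)

lemma two_mul_mul_le_succ {n : ℕ} (hn : 2 ≤ n) : 2 * n * c n ≤ c (n + 1) := by
  have ends : c 1 * c n + c n * c 1 ≤ ∑ k ∈ Ico 1 (n + 1), c k * c (n + 1 - k) := by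
    rw [sum_eq_sum_Ico_succ_bot (by omega), sum_Ico_succ_top (by omega)]
    simp only [Nat.add_sub_cancel, Nat.add_sub_cancel_left]
    omega
  rw [hrec (n + 1) (by omega), Nat.add_sub_cancel]
  simp only [h1, one_mul, mul_one] at ends
  calc 2 * n * c n = n * (c n + c n) := by ring
    _ ≤ _ := by gcongr

lemma small_values : c 2 = 1 ∧ c 3 = 4 ∧ c 4 = 27 ∧ c 5 = 248 ∧ c 6 = 2830 ∧ c 7 = 38232 ∧
    c 8 = 593859 ∧ c 9 = 10401712 ∧ c 10 = 202601898 := by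
  simp [hrec, h1, sum_Ico_eq_sum_range, sum_range_succ]

lemma eq_middleSum {n : ℕ} (hn : 5 ≤ n) :
    c n = (n - 1) * (2 * c (n - 1) + 2 * c (n - 2) + middleSum c n) := by
  obtain ⟨m, rfl⟩ : ∃ m, n = m + 5 := ⟨n - 5, by omega⟩
  rw [hrec (m + 5) (by omega)]
  congr 1
  rw [show m + 5 = m + 3 + 1 + 1 by rfl, sum_Ico_succ_top (by omega), sum_Ico_succ_top (by omega),
    sum_eq_sum_Ico_succ_bot (by omega), sum_eq_sum_Ico_succ_bot (by omega)]
  simp only [show m + 3 + 1 + 1 - (m + 3) = 2 by omega,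
    show m + 3 + 1 + 1 - (m + 3 + 1) = 1 by omega, show m + 3 + 1 + 1 - (1 + 1) = m + 3 by omega,
    Nat.add_sub_cancel, h1, (small_values c h1 hrec).1, middleSum]
  ring

lemma middleSum_le_of_le_thirteen {n : ℕ} (hlo : 6 ≤ n) (hhi : n ≤ 13) :
    middleSum c n ≤ 16 * c (n - 3) := by
  obtain ⟨-, h3, h4, h5, h6, h7, h8, h9, h10⟩ := small_values c h1 hrec
  interval_cases n <;>
    simp [middleSum, sum_Ico_eq_sum_range, sum_range_succ, h3, h4, h5, h6, h7, h8, h9, h10]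

lemma middleSum_le {n : ℕ} (hn : 6 ≤ n)
    (hU : ∀ m, 4 ≤ m → m + 3 ≤ n → c m ≤ 2 * m * c (m - 1)) :
    middleSum c n ≤ 16 * c (n - 3) := by
  obtain h13 | h13 := lt_or_ge n 13
  · exact middleSum_le_of_le_thirteen c h1 hrec hn h13.le
  clear hn
  induction n, h13 using Nat.le_induction with
  | base => exact middleSum_le_of_le_thirteen c h1 hrec (by norm_num) le_rfl
  | succ n hn ih =>
    obtain ⟨k, rfl⟩ : ∃ k, n = k + 3 := ⟨n - 3, by omega⟩
    have hT := ih fun m h4 hm => hU m h4 (by omega)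
    have hstep := middleSum_succ_le c (n := k + 3) (by omega) fun m h4 hm => hU m h4 (by omega)
    have hgrow := two_mul_mul_le_succ c h1 hrec (n := k) (by omega)
    simp only [Nat.add_sub_cancel, (small_values c h1 hrec).2.1,
      show k + 3 + 1 - 3 = k + 1 by omega, show k + 3 - 2 = k + 1 by omega] at hT hstep ⊢
    -- `16 (k + 5) ≤ 12 · 2k` once `k ≥ 10`, and `c 3 = 4`
    nlinarith [Nat.mul_le_mul_left (k + 5) hT, Nat.mul_le_mul_right (c k) hn]

lemma lt_two_mul_mul_pred {n : ℕ} (hn : 2 ≤ n) : c n < 2 * n * c (n - 1) := by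
  induction n using Nat.strong_induction_on with
  | _ n ih =>
    obtain hle | hgt := le_or_gt n 8
    · obtain ⟨h2, h3, h4, h5, h6, h7, h8, -⟩ := small_values c h1 hrec
      interval_cases n <;> simp [h1, h2, h3, h4, h5, h6, h7, h8]
    obtain ⟨m, rfl⟩ : ∃ m, n = m + 9 := ⟨n - 9, by omega⟩
    have hT := middleSum_le c h1 hrec (n := m + 9) (by omega)
      fun k h4 hk => (ih k (by omega) (by omega)).le
    have hdec := eq_middleSum c h1 hrec (n := m + 9) (by omega)
    have hgrow := two_mul_mul_le_succ c h1 hrec (n := m + 7) (by omega)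
    have hgrow' := two_mul_mul_le_succ c h1 hrec (n := m + 6) (by omega)
    have hpos := pos c h1 hrec (n := m + 7) (by omega)
    simp only [show m + 9 - 1 = m + 8 by omega, show m + 9 - 2 = m + 7 by omega,
      show m + 9 - 3 = m + 6 by omega] at hT hdec ⊢
    rw [hdec]
    -- `c (m + 8) ≥ 2 (m + 7) c (m + 7)` leaves a margin `2 (m + 6) c (m + 7) ≥ 4 (m + 6)² c (m + 6)`,
    -- which beats `(m + 8) T (m + 9) ≤ 16 (m + 8) c (m + 6)`
    nlinarith [Nat.mul_le_mul_left (m + 8) hT, Nat.mul_le_mul_left (m + 8) hgrow']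

lemma two_mul_sub_one_mul_pred_lt {n : ℕ} (hn : 5 ≤ n) : (2 * n - 1) * c (n - 1) < c n := by
  obtain ⟨m, rfl⟩ : ∃ m, n = m + 5 := ⟨n - 5, by omega⟩
  have hU := lt_two_mul_mul_pred c h1 hrec (n := m + 4) (by omega)
  rw [eq_middleSum c h1 hrec (n := m + 5) (by omega)]
  simp only [show 2 * (m + 5) - 1 = 2 * m + 9 by omega, show m + 5 - 1 = m + 4 by omega,
    show m + 5 - 2 = m + 3 by omega, show m + 4 - 1 = m + 3 by omega] at hU ⊢
  nlinarith

end ChordRecurrence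

/-- with `c 1 = 1` and `c n = (n-1)·Σ_{k=1}^{n-1} c k·c (n-k)` for `n ≥ 2`,
for all `n ≥ 5` one has `(2n-1)·c (n-1) < c n < 2n·c (n-1)`. -/
theorem stmt2 (c : ℕ → ℕ) (h1 : c 1 = 1)
    (hrec : ∀ n : ℕ, 2 ≤ n → c n = (n - 1) * ∑ k ∈ Finset.Ico 1 n, c k * c (n - k)) :
    ∀ n : ℕ, 5 ≤ n → (2 * n - 1) * c (n - 1) < c n ∧ c n < 2 * n * c (n - 1) :=
  fun _ hn => ⟨ChordRecurrence.two_mul_sub_one_mul_pred_lt c h1 hrec hn,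
    ChordRecurrence.lt_two_mul_mul_pred c h1 hrec (by omega)⟩
end

section
/- Let c_n be defined by c_1 = 1 and c_n = (n-1) Σ_{k=1}^{n-1} c_k c_{n-k}. For every n ≥ 8 and every k with 2 ≤ k ≤ ⌊n/2⌋, one has c_k · c_{n-k} ≤ c_{k-1} · c_{n-k+1}. -/
/-! The claim follows from the two-sided bound `2 (n - 1) c (n - 1) ≤ c n ≤ 2 n c (n - 1)`:
`c k c (n - k) ≤ 2 k c (k - 1) c (n - k) ≤ 2 (n - k) c (k - 1) c (n - k)`
`≤ c (k - 1) c (n - k + 1)`.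
The lower bound comes from the two extreme terms of the recurrence. The upper bound is proved by
strong induction: the claim at `n`, which only needs the upper bound below `n`, shows that the
middle terms `c k c (n - k)`, `3 ≤ k ≤ n - 3`, are at most `c 3 c (n - 3)`, so
`c n ≤ (n - 1) (2 c (n - 1) + 2 c (n - 2) + 4 (n - 5) c (n - 3))`, and the lower bound turns
this into `c n ≤ 2 n c (n - 1)`. -/

structure IsChordSeq (c : ℕ → ℕ) : Prop where
  one : c 1 = 1
  eq_mul_sum : ∀ n : ℕ, 2 ≤ n → c n = (n - 1) * ∑ k ∈ Finset.Ico 1 n, c k * c (n - k)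

namespace IsChordSeq

variable {c : ℕ → ℕ}

lemma small_values (hc : IsChordSeq c) : c 2 = 1 ∧ c 3 = 4 ∧ c 4 = 27 := by
  have h2 : c 2 = 1 := by
    rw [hc.eq_mul_sum 2 le_rfl]; simp [hc.one]
  have h3 : c 3 = 4 := by
    rw [hc.eq_mul_sum 3 (by norm_num)]; simp [Finset.sum_Ico_succ_top, hc.one, h2]
  have h4 : c 4 = 27 := by
    rw [hc.eq_mul_sum 4 (by norm_num)]; simp [Finset.sum_Ico_succ_top, hc.one, h2, h3]
  exact ⟨h2, h3, h4⟩

lemma two_mul_mul_le (hc : IsChordSeq c) {n : ℕ} (hn : 2 ≤ n) : 2 * n * c n ≤ c (n + 1) := by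
  have hsub : ({1, n} : Finset ℕ) ⊆ Finset.Ico 1 (n + 1) := by
    intro x hx
    simp only [Finset.mem_insert, Finset.mem_singleton] at hx
    simp only [Finset.mem_Ico]
    omega
  have hpair := Finset.sum_le_sum_of_subset (f := fun k => c k * c (n + 1 - k)) hsub
  rw [Finset.sum_pair (by omega : (1 : ℕ) ≠ n)] at hpair
  simp only [Nat.add_sub_cancel, Nat.add_sub_cancel_left, hc.one, one_mul, mul_one] at hpair
  calc 2 * n * c n = n * (c n + c n) := by ring
    _ ≤ n * ∑ k ∈ Finset.Ico 1 (n + 1), c k * c (n + 1 - k) := Nat.mul_le_mul_left _ hpair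
    _ = c (n + 1) := by rw [hc.eq_mul_sum (n + 1) (by omega), Nat.add_sub_cancel]

lemma mul_le_mul_succ (hc : IsChordSeq c) {k m : ℕ} (hk : c (k + 1) ≤ 2 * (k + 1) * c k)
    (hkm : k + 1 ≤ m) (hm : 2 ≤ m) : c (k + 1) * c m ≤ c k * c (m + 1) :=
  calc c (k + 1) * c m ≤ 2 * (k + 1) * c k * c m := Nat.mul_le_mul_right _ hk
    _ ≤ 2 * m * c k * c m := by gcongr
    _ = c k * (2 * m * c m) := by ring
    _ ≤ c k * c (m + 1) := Nat.mul_le_mul_left _ (hc.two_mul_mul_le hm)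

lemma mul_le_three_mul (hc : IsChordSeq c) {n : ℕ}
    (hup : ∀ k, 3 ≤ k → 2 * (k + 1) ≤ n → c (k + 1) ≤ 2 * (k + 1) * c k)
    {j : ℕ} (hj : 3 ≤ j) (hjn : j + 3 ≤ n) : c j * c (n - j) ≤ c 3 * c (n - 3) := by
  set f : ℕ → ℕ := fun j => c j * c (n - j)
  have hanti : AntitoneOn f (Set.Icc 3 (n / 2)) := by
    refine antitoneOn_of_add_one_le Set.ordConnected_Icc fun a _ ha ha1 => ?_
    simp only [Set.mem_Icc] at ha ha1
    have h := hc.mul_le_mul_succ (hup a ha.1 (by omega)) (m := n - (a + 1)) (by omega) (by omega)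
    rwa [show n - (a + 1) + 1 = n - a by omega] at h
  have hsymm : ∀ i ≤ n, f (n - i) = f i := fun i hi => by
    simp only [f, Nat.sub_sub_self hi, mul_comm]
  change f j ≤ f 3
  rcases le_or_gt j (n / 2) with h | h
  · exact hanti ⟨le_rfl, by omega⟩ ⟨hj, h⟩ hj
  · rw [← hsymm j (by omega)]
    exact hanti ⟨le_rfl, by omega⟩ ⟨by omega, by omega⟩ (by omega)

lemma sum_mul_sub_le (hc : IsChordSeq c) {m : ℕ}
    (hmid : ∀ j, 3 ≤ j → j + 3 ≤ m + 5 → c j * c (m + 5 - j) ≤ c 3 * c (m + 2)) :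
    ∑ k ∈ Finset.Ico 1 (m + 5), c k * c (m + 5 - k)
      ≤ 2 * c (m + 4) + 2 * c (m + 3) + 4 * m * c (m + 2) := by
  obtain ⟨h2, h3, -⟩ := hc.small_values
  have hmiddle : ∑ k ∈ Finset.Ico 3 (m + 3), c k * c (m + 5 - k) ≤ m * (4 * c (m + 2)) :=
    calc ∑ k ∈ Finset.Ico 3 (m + 3), c k * c (m + 5 - k)
        ≤ (Finset.Ico 3 (m + 3)).card • (c 3 * c (m + 2)) :=
          Finset.sum_le_card_nsmul _ _ _ fun k hk => by
            rw [Finset.mem_Ico] at hk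
            exact hmid k hk.1 (by omega)
      _ = m * (4 * c (m + 2)) := by rw [Nat.card_Ico, Nat.add_sub_cancel, smul_eq_mul, h3]
  rw [Finset.sum_eq_sum_Ico_succ_bot (by omega), Finset.sum_eq_sum_Ico_succ_bot (by omega),
    Finset.sum_Ico_succ_top (by omega), Finset.sum_Ico_succ_top (by omega)]
  simp only [show m + 5 - 1 = m + 4 by omega, show m + 5 - 2 = m + 3 by omega,
    show m + 5 - (m + 3) = 2 by omega, show m + 5 - (m + 4) = 1 by omega, hc.one, h2]
  linarith

lemma le_two_mul_mul (hc : IsChordSeq c) : ∀ n, 1 ≤ n → c (n + 1) ≤ 2 * (n + 1) * c n := by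
  obtain ⟨h2, h3, h4⟩ := hc.small_values
  intro n
  induction n using Nat.strong_induction_on with
  | _ n ih =>
    intro hn
    obtain rfl | rfl | rfl | ⟨m, rfl⟩ : n = 1 ∨ n = 2 ∨ n = 3 ∨ ∃ m, n = m + 4 :=
      by rcases n with _ | _ | _ | _ | m <;> simp_all
    · simp [h2, hc.one]
    · simp [h2, h3]
    · simp [h3, h4]
    have hsum := hc.sum_mul_sub_le fun j hj hjm => by
      simpa using hc.mul_le_three_mul (n := m + 5)
        (fun k _ hkm => ih k (by omega) (by omega)) hj hjm
    have ha := hc.two_mul_mul_le (n := m + 3) (by omega)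
    have hb := hc.two_mul_mul_le (n := m + 2) (by omega)
    calc c (m + 4 + 1) = (m + 4) * ∑ k ∈ Finset.Ico 1 (m + 5), c k * c (m + 5 - k) := by
          rw [hc.eq_mul_sum (m + 5) (by omega)]; rfl
      _ ≤ (m + 4) * (2 * c (m + 4) + 2 * c (m + 3) + 4 * m * c (m + 2)) :=
          Nat.mul_le_mul_left _ hsum
      _ ≤ 2 * (m + 4 + 1) * c (m + 4) := by nlinarith

end IsChordSeq

/-- with `c 1 = 1` and `c n = (n-1)·Σ_{k=1}^{n-1} c k·c (n-k)` for `n ≥ 2`,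
for every `n ≥ 8` and every `k` with `2 ≤ k ≤ ⌊n/2⌋`, one has
`c k · c (n-k) ≤ c (k-1) · c (n-k+1)`. -/
theorem stmt3 (c : ℕ → ℕ) (h1 : c 1 = 1)
    (hrec : ∀ n : ℕ, 2 ≤ n → c n = (n - 1) * ∑ k ∈ Finset.Ico 1 n, c k * c (n - k)) :
    ∀ n k : ℕ, 8 ≤ n → 2 ≤ k → k ≤ n / 2 →
      c k * c (n - k) ≤ c (k - 1) * c (n - k + 1) := by
  intro n k _ hk2 hk
  have hc : IsChordSeq c := ⟨h1, hrec⟩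
  obtain ⟨k, rfl⟩ : ∃ j, k = j + 1 := ⟨k - 1, by omega⟩
  exact hc.mul_le_mul_succ (hc.le_two_mul_mul k (by omega)) (by omega) (by omega)
end

section
/- Let g_{n,k} be defined by g_{n,2} = 1/(2n), g_{n,k} = (1−1/n)g_{n-1,k-1} + (1/(2n))g_{n-2,k-1} for n ≥ 4, with probability-distribution initial conditions for n ≤ 3. Then the mean Σ_k k·g_{n,k} is asymptotically equivalent to 2n/3 as n → ∞. -/
/-! Together with the mass `1/(2n)` of `g_{n,2}`, the weights `1 - 1/n` and `1/(2n)` of the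
recurrence add up to `1`, so `g_n` is a probability distribution for every `n`, and its mean
`M_n` satisfies `M_n = (1 - 1/n) (M_{n-1} + 1) + (1/(2n)) (M_{n-2} + 1) + 1/n`. The error
`e_n = M_n - 2n/3` then satisfies `e_n = (1 - 1/n) e_{n-1} + (1/(2n)) e_{n-2} + 1/(2n)`: a
convex combination of `e_{n-1}`, `e_{n-2}` and `1`, hence bounded, which gives `M_n / n → 2/3`. -/

open Filter Finset

lemma abs_convex_comb_le {a b c x y z B : ℝ} (ha : 0 ≤ a) (hb : 0 ≤ b) (hc : 0 ≤ c)
    (habc : a + b + c = 1) (hx : |x| ≤ B) (hy : |y| ≤ B) (hz : |z| ≤ B) :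
    |a * x + b * y + c * z| ≤ B := by
  rw [abs_le] at *
  obtain ⟨hx₁, hx₂⟩ := hx
  obtain ⟨hy₁, hy₂⟩ := hy
  obtain ⟨hz₁, hz₂⟩ := hz
  constructor <;> nlinarith [mul_le_mul_of_nonneg_left hx₁ ha, mul_le_mul_of_nonneg_left hx₂ ha,
    mul_le_mul_of_nonneg_left hy₁ hb, mul_le_mul_of_nonneg_left hy₂ hb,
    mul_le_mul_of_nonneg_left hz₁ hc, mul_le_mul_of_nonneg_left hz₂ hc]

lemma exists_abs_le_of_eq_convex_comb {e a b : ℕ → ℝ}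
    (ha : ∀ n, 4 ≤ n → 0 ≤ a n) (hb : ∀ n, 4 ≤ n → 0 ≤ b n)
    (hab : ∀ n, 4 ≤ n → a n + 2 * b n = 1)
    (he : ∀ n, 4 ≤ n → e n = a n * e (n - 1) + b n * e (n - 2) + b n) :
    ∃ B, ∀ n, 2 ≤ n → |e n| ≤ B := by
  refine ⟨max (max |e 2| |e 3|) 1, fun n => ?_⟩
  induction n using Nat.strong_induction_on with
  | _ n ih =>
    intro hn
    rcases (show n = 2 ∨ n = 3 ∨ 4 ≤ n by omega) with rfl | rfl | hn
    · exact (le_max_left _ _).trans (le_max_left _ _)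
    · exact (le_max_right _ _).trans (le_max_left _ _)
    · have h := abs_convex_comb_le (z := 1) (ha n hn) (hb n hn) (hb n hn)
        (by linarith [hab n hn]) (ih (n - 1) (by omega) (by omega))
        (ih (n - 2) (by omega) (by omega)) (by simp)
      rwa [mul_one, ← he n hn] at h

lemma tendsto_div_of_abs_sub_mul_le {u : ℕ → ℝ} {c B : ℝ}
    (h : ∀ᶠ n in atTop, |u n - c * n| ≤ B) :
    Tendsto (fun n : ℕ => u n / n) atTop (nhds c) := by
  have h₀ : Tendsto (fun n : ℕ => (u n - c * n) / n) atTop (nhds 0) := by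
    refine squeeze_zero_norm' ?_ (tendsto_const_div_atTop_nhds_zero_nat B)
    filter_upwards [h, eventually_gt_atTop 0] with n hn hpos
    rw [Real.norm_eq_abs, abs_div, Nat.abs_cast]
    gcongr
  refine (zero_add c ▸ h₀.add_const c).congr' ?_
  filter_upwards [eventually_gt_atTop 0] with n hn
  field_simp
  ring

structure GRecurrence (g : ℕ → ℕ → ℝ) : Prop where
  eq_zero : ∀ n k : ℕ, 2 ≤ n → (k < 2 ∨ (n ≤ 3 ∧ n < k)) → g n k = 0
  sum_init : ∀ n : ℕ, 2 ≤ n → n ≤ 3 → ∑ k ∈ range (n + 1), g n k = 1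
  apply_two : ∀ n : ℕ, 4 ≤ n → g n 2 = 1 / (2 * (n : ℝ))
  apply_of_three_le : ∀ n k : ℕ, 4 ≤ n → 3 ≤ k →
    g n k = (1 - 1 / (n : ℝ)) * g (n - 1) (k - 1) + (1 / (2 * (n : ℝ))) * g (n - 2) (k - 1)

def rowMean (g : ℕ → ℕ → ℝ) (n : ℕ) : ℝ := ∑ k ∈ range (n + 1), (k : ℝ) * g n k

namespace GRecurrence

variable {g : ℕ → ℕ → ℝ}

lemma eq_zero_of_lt_two (hg : GRecurrence g) {n k : ℕ} (hn : 2 ≤ n) (hk : k < 2) :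
    g n k = 0 :=
  hg.eq_zero n k hn (Or.inl hk)

lemma eq_zero_of_lt (hg : GRecurrence g) {n k : ℕ} (hn : 2 ≤ n) (hk : n < k) : g n k = 0 := by
  induction n using Nat.strong_induction_on generalizing k with
  | _ n ih =>
    rcases le_or_gt n 3 with h3 | h4
    · exact hg.eq_zero n k hn (Or.inr ⟨h3, hk⟩)
    · rw [hg.apply_of_three_le n k h4 (by omega), ih (n - 1) (by omega) (by omega) (by omega),
        ih (n - 2) (by omega) (by omega) (by omega), mul_zero, mul_zero, add_zero]

lemma apply_succ (hg : GRecurrence g) {n : ℕ} (hn : 4 ≤ n) (k : ℕ) :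
    g n (k + 1) = (if k = 1 then 1 / (2 * (n : ℝ)) else 0) +
      (1 - 1 / (n : ℝ)) * g (n - 1) k + 1 / (2 * (n : ℝ)) * g (n - 2) k := by
  rcases lt_trichotomy k 1 with hk | rfl | hk
  · obtain rfl : k = 0 := by omega
    simp [hg.eq_zero_of_lt_two (k := 1) (by omega : 2 ≤ n) (by omega),
      hg.eq_zero_of_lt_two (k := 0) (by omega : 2 ≤ n - 1) (by omega),
      hg.eq_zero_of_lt_two (k := 0) (by omega : 2 ≤ n - 2) (by omega)]
  · simp [hg.apply_two n hn, hg.eq_zero_of_lt_two (k := 1) (by omega : 2 ≤ n - 1) (by omega),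
      hg.eq_zero_of_lt_two (k := 1) (by omega : 2 ≤ n - 2) (by omega)]
  · rw [if_neg hk.ne', hg.apply_of_three_le n (k + 1) hn (by omega), Nat.add_sub_cancel, zero_add]

lemma sum_range_add_two (hg : GRecurrence g) (f : ℕ → ℝ) {n : ℕ} (hn : 2 ≤ n) :
    ∑ k ∈ range (n + 2), f k * g n k = ∑ k ∈ range (n + 1), f k * g n k := by
  rw [sum_range_succ, hg.eq_zero_of_lt hn (by omega), mul_zero, add_zero]

lemma sum_mul_eq (hg : GRecurrence g) (w : ℕ → ℝ) {n : ℕ} (hn : 4 ≤ n) :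
    ∑ k ∈ range (n + 1), w k * g n k =
      w 2 / (2 * n) + (1 - 1 / (n : ℝ)) * ∑ k ∈ range (n - 1 + 1), w (k + 1) * g (n - 1) k +
        1 / (2 * (n : ℝ)) * ∑ k ∈ range (n - 2 + 1), w (k + 1) * g (n - 2) k := by
  have h₁ : n - 1 + 1 = n := by omega
  have h₂ : n = n - 2 + 2 := by omega
  rw [sum_range_succ', hg.eq_zero_of_lt_two (by omega) (by omega : 0 < 2), mul_zero, add_zero,
    h₁, ← hg.sum_range_add_two _ (by omega), ← h₂, mul_sum, mul_sum]
  simp_rw [hg.apply_succ hn, mul_add, sum_add_distrib, mul_ite, mul_zero,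
    sum_ite_eq' _ _ _, if_pos (mem_range.2 (by omega : 1 < n)), mul_left_comm (w _)]
  ring

lemma sum_eq_one (hg : GRecurrence g) {n : ℕ} (hn : 2 ≤ n) :
    ∑ k ∈ range (n + 1), g n k = 1 := by
  induction n using Nat.strong_induction_on with
  | _ n ih =>
    rcases le_or_gt n 3 with h3 | h4
    · exact hg.sum_init n hn h3
    · have h := hg.sum_mul_eq (fun _ => 1) h4
      simp only [one_mul] at h
      rw [h, ih (n - 1) (by omega) (by omega), ih (n - 2) (by omega) (by omega)]
      have : (n : ℝ) ≠ 0 := by positivity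
      field_simp
      ring

lemma rowMean_sub_eq (hg : GRecurrence g) {n : ℕ} (hn : 4 ≤ n) :
    rowMean g n - 2 * n / 3 =
      (1 - 1 / (n : ℝ)) * (rowMean g (n - 1) - 2 * ((n - 1 : ℕ) : ℝ) / 3) +
        1 / (2 * (n : ℝ)) * (rowMean g (n - 2) - 2 * ((n - 2 : ℕ) : ℝ) / 3) +
        1 / (2 * (n : ℝ)) := by
  have h := hg.sum_mul_eq (fun k => k) hn
  simp only [Nat.cast_add, Nat.cast_one, add_mul, one_mul, sum_add_distrib,
    hg.sum_eq_one (by omega : 2 ≤ n - 1), hg.sum_eq_one (by omega : 2 ≤ n - 2)] at h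
  rw [rowMean, rowMean, rowMean, h, Nat.cast_sub (by omega), Nat.cast_sub (by omega)]
  have : (n : ℝ) ≠ 0 := by positivity
  field_simp
  push_cast
  ring

end GRecurrence

theorem stmt18_general (g : ℕ → ℕ → ℝ)
    (hsupp : ∀ n k : ℕ, 2 ≤ n → (k < 2 ∨ (n ≤ 3 ∧ n < k)) → g n k = 0)
    (hinit : ∀ n : ℕ, 2 ≤ n → n ≤ 3 → ∑ k ∈ Finset.range (n + 1), g n k = 1)
    (hg2 : ∀ n : ℕ, 4 ≤ n → g n 2 = 1 / (2 * (n : ℝ)))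
    (hrec : ∀ n k : ℕ, 4 ≤ n → 3 ≤ k →
      g n k = (1 - 1 / (n : ℝ)) * g (n - 1) (k - 1) +
        (1 / (2 * (n : ℝ))) * g (n - 2) (k - 1)) :
    Tendsto
      (fun n : ℕ => (∑ k ∈ Finset.range (n + 1), (k : ℝ) * g n k) / (n : ℝ))
      atTop (nhds (2 / 3)) := by
  have hg : GRecurrence g := ⟨hsupp, hinit, hg2, hrec⟩
  obtain ⟨B, hB⟩ := exists_abs_le_of_eq_convex_comb (e := fun n => rowMean g n - 2 * n / 3)
    (a := fun n => 1 - 1 / (n : ℝ)) (b := fun n => 1 / (2 * (n : ℝ)))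
    (fun n hn => sub_nonneg.2 (div_le_one_of_le₀ (by exact_mod_cast (by omega : 1 ≤ n))
      (Nat.cast_nonneg n)))
    (fun n _ => by positivity)
    (fun n hn => by field_simp; ring)
    (fun n hn => hg.rowMean_sub_eq hn)
  exact tendsto_div_of_abs_sub_mul_le (B := B) <| (eventually_ge_atTop 2).mono fun n hn => by
    simpa only [rowMean, mul_div_right_comm] using hB n hn

/-- with `g_{n,2} = 1/(2n)` and
`g_{n,k} = (1 - 1/n)·g_{n-1,k-1} + (1/(2n))·g_{n-2,k-1}` for `n ≥ 4` (probability
initial conditions for `n ≤ 3`), the mean `Σ_k k·g_{n,k}` is asymptotically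
equivalent to `2n/3`, i.e. `(Σ_k k·g_{n,k})/n → 2/3`. -/
theorem stmt18 (g : ℕ → ℕ → ℝ)
    (hsupp : ∀ n k : ℕ, 2 ≤ n → (k < 2 ∨ (n ≤ 3 ∧ n < k)) → g n k = 0)
    (hnonneg : ∀ n k : ℕ, 2 ≤ n → 0 ≤ g n k)
    (hinit : ∀ n : ℕ, 2 ≤ n → n ≤ 3 → ∑ k ∈ Finset.range (n + 1), g n k = 1)
    (hg2 : ∀ n : ℕ, 4 ≤ n → g n 2 = 1 / (2 * (n : ℝ)))
    (hrec : ∀ n k : ℕ, 4 ≤ n → 3 ≤ k →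
      g n k = (1 - 1 / (n : ℝ)) * g (n - 1) (k - 1) +
        (1 / (2 * (n : ℝ))) * g (n - 2) (k - 1)) :
    Tendsto
      (fun n : ℕ => (∑ k ∈ Finset.range (n + 1), (k : ℝ) * g n k) / (n : ℝ))
      atTop (nhds (2 / 3)) :=
  stmt18_general g hsupp hinit hg2 hrec
end
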